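/- arXiv:1909.11880 — 2 statements merged into one kernel-verified Lean document; each statement's English description precedes it below -/
import Mathlib

section
/- Let n > 0 and set i = 2·|W_{n−1}| + 1 = 3ⁿ. Then, letting αₘ denote the subword of W of length |Wₘ| beginning at position i, the sequence m ↦ d₀(Wₘ, αₘ) converges to 1/6 + 1/(2·3ⁿ) and the sequence m ↦ d(Wₘ, αₘ) converges to 2/9 + 2/3^{n+1} as m → ∞. -/
open Filter

/-- The Chacón words: `W₀ = 0`, `W_{n+1} = Wₙ Wₙ 1 Wₙ`. -/
def chaconWord : ℕ → List (Fin 2)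
  | 0 => [0]
  | n + 1 => chaconWord n ++ chaconWord n ++ [1] ++ chaconWord n

/-- `W` is the infinite word having every `Wₙ` as an initial segment. -/
def IsChaconInfWord (W : ℕ → Fin 2) : Prop :=
  ∀ n i, i < (chaconWord n).length → W i = (chaconWord n).getD i 0

/-- A finite word `α` occurs in a finite word `β` at position `j`. -/
def OccursAt (α β : List (Fin 2)) (j : ℕ) : Prop :=
  j + α.length ≤ β.length ∧ ∀ k < α.length, β.getD (j + k) 0 = α.getD k 0

/-- A finite word `α` occurs in the infinite word `W` at position `j`. -/
def OccursAtInf (W : ℕ → Fin 2) (α : List (Fin 2)) (j : ℕ) : Prop :=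
  ∀ k < α.length, W (j + k) = α.getD k 0

/-- The subword of the infinite word `W` of length `L` beginning at position `i`. -/
def subword (W : ℕ → Fin 2) (i L : ℕ) : List (Fin 2) :=
  (List.range L).map fun k => W (i + k)

/-- The (normalized) Hamming distance `d` of two finite words. -/
noncomputable def hamming (α β : List (Fin 2)) : ℝ :=
  (((Finset.range α.length).filter fun i => α.getD i 0 ≠ β.getD i 0).card : ℝ) / α.length

/-- The modified 0-Hamming distance `d₀` of two finite words. -/
noncomputable def hamming0 (α β : List (Fin 2)) : ℝ :=
  (((Finset.range α.length).filter fun i => α.getD i 0 = 0 ∧ β.getD i 0 = 1).card : ℝ) /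
    (((Finset.range α.length).filter fun i => α.getD i 0 = 0).card : ℝ)

namespace ChaconAux

def clen (m : ℕ) : ℕ := (chaconWord m).length

lemma clen_succ (m : ℕ) : clen (m+1) = 3 * clen m + 1 := by
  simp [clen, chaconWord]; ring

lemma clen_zero : clen 0 = 1 := rfl

lemma clen_pos (m : ℕ) : 0 < clen m := by
  cases m with
  | zero => simp [clen_zero]
  | succ m => rw [clen_succ]; omega

lemma clen_mono : Monotone clen :=
  monotone_nat_of_le_succ fun m => by rw [clen_succ]; omega

lemma two_clen (m : ℕ) : 2 * clen m + 1 = 3 ^ (m + 1) := by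
  induction m with
  | zero => rfl
  | succ m ih => rw [clen_succ, pow_succ, ← ih]; ring

lemma chacon_succ_def (m : ℕ) :
    chaconWord (m+1) = chaconWord m ++ (chaconWord m ++ ([1] ++ chaconWord m)) := by
  simp [chaconWord]

variable {W : ℕ → Fin 2}

lemma W_eq (hW : IsChaconInfWord W) {m k : ℕ} (h : k < clen m) :
    W k = (chaconWord m).getD k 0 := hW m k h

lemma W_shiftA (hW : IsChaconInfWord W) {m k : ℕ} (h : k < clen m) :
    W (clen m + k) = W k := by
  have h1 : clen m + k < clen (m+1) := by rw [clen_succ]; omega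
  rw [W_eq hW h1, W_eq hW h, chacon_succ_def]
  rw [List.getD_append_right _ _ _ _ (by simp [clen])]
  have : clen m + k - (chaconWord m).length = k := by simp [clen]
  rw [this, List.getD_append _ _ _ _ h]

lemma W_spacer (hW : IsChaconInfWord W) (m : ℕ) : W (2 * clen m) = 1 := by
  have h1 : 2 * clen m < clen (m+1) := by rw [clen_succ]; omega
  rw [W_eq hW h1, chacon_succ_def]
  rw [List.getD_append_right _ _ _ _ (by simp [clen]; omega)]
  rw [List.getD_append_right _ _ _ _ (by simp [clen]; omega)]
  have : 2 * clen m - (chaconWord m).length - (chaconWord m).length = 0 := by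
    simp [clen]; omega
  rw [this]
  rfl

lemma W_shiftB (hW : IsChaconInfWord W) {m k : ℕ} (h : k < clen m) :
    W (2 * clen m + 1 + k) = W k := by
  have h1 : 2 * clen m + 1 + k < clen (m+1) := by rw [clen_succ]; omega
  rw [W_eq hW h1, W_eq hW h, chacon_succ_def]
  rw [List.getD_append_right _ _ _ _ (by simp [clen]; omega)]
  rw [List.getD_append_right _ _ _ _ (by simp [clen]; omega)]
  have : 2 * clen m + 1 + k - (chaconWord m).length - (chaconWord m).length = 1 + k := by
    simp [clen]; omega
  rw [this, List.getD_append_right _ _ _ _ (by simp)]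
  simp

lemma W_zero (hW : IsChaconInfWord W) : W 0 = 0 := by
  have := W_eq hW (m := 0) (k := 0) (by simp [clen_zero])
  simpa [chaconWord] using this

lemma W_last (hW : IsChaconInfWord W) (m : ℕ) : W (clen m - 1) = 0 := by
  induction m with
  | zero => simpa [clen_zero] using W_zero hW
  | succ m ih =>
      have h : clen (m+1) - 1 = 2 * clen m + 1 + (clen m - 1) := by
        have := clen_pos m; rw [clen_succ]; omega
      rw [h, W_shiftB hW (by have := clen_pos m; omega)]
      exact ih

open Finset

lemma sum_split3 (f : ℕ → ℕ) (l : ℕ) :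
    ∑ k ∈ range (3*l+1), f k =
      (∑ k ∈ range l, f k) + (∑ k ∈ range l, f (l + k)) + f (2*l)
        + (∑ k ∈ range l, f (2*l+1+k)) := by
  rw [show 3*l+1 = l + (l + (1 + l)) by ring]
  rw [Finset.sum_range_add, Finset.sum_range_add, Finset.sum_range_add, Finset.sum_range_one]
  simp only [← add_assoc, add_zero]
  have h2 : l + l = 2*l := by ring
  have h4 : ∀ k : ℕ, l + l + 1 + k = 2*l+1+k := fun k => by ring
  simp only [h2, h4]

lemma sum_split5 (f : ℕ → ℕ) (t : ℕ) :
    ∑ k ∈ range (3*t+3), f k =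
      (∑ k ∈ range t, f k) + f t + (∑ k ∈ range t, f (t+1+k)) + f (2*t+1) + f (2*t+2)
        + (∑ k ∈ range t, f (2*t+3+k)) := by
  rw [show 3*t+3 = t + (1 + (t + (1 + (1 + t)))) by ring]
  rw [Finset.sum_range_add, Finset.sum_range_add, Finset.sum_range_add, Finset.sum_range_add,
    Finset.sum_range_add, Finset.sum_range_one, Finset.sum_range_one, Finset.sum_range_one]
  simp only [← add_assoc, add_zero]
  have h2 : t + 1 + t = 2*t+1 := by ring
  have h3 : t + 1 + t + 1 = 2*t+2 := by ring
  have h4 : ∀ k : ℕ, t + 1 + t + 1 + 1 + k = 2*t+3+k := fun k => by ring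
  simp only [h2, h3, h4]

open Finset in
lemma cntZ (hW : IsChaconInfWord W) (m : ℕ) :
    ∑ k ∈ range (clen m), (if W k = 0 then 1 else 0) = 3 ^ m := by
  induction m with
  | zero => rw [clen_zero, Finset.sum_range_one, W_zero hW]; simp
  | succ m ih =>
      rw [clen_succ, sum_split3]
      have e1 : ∑ k ∈ range (clen m), (if W (clen m + k) = 0 then (1:ℕ) else 0)
          = ∑ k ∈ range (clen m), (if W k = 0 then 1 else 0) :=
        Finset.sum_congr rfl fun k hk => by rw [W_shiftA hW (mem_range.mp hk)]
      have e2 : ∑ k ∈ range (clen m), (if W (2*clen m+1+k) = 0 then (1:ℕ) else 0)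
          = ∑ k ∈ range (clen m), (if W k = 0 then 1 else 0) :=
        Finset.sum_congr rfl fun k hk => by rw [W_shiftB hW (mem_range.mp hk)]
      rw [e1, e2, W_spacer hW, ih]
      norm_num [pow_succ]
      ring

open Finset in
lemma cntP (hW : IsChaconInfWord W) (m : ℕ) :
    2 * (∑ t ∈ range (clen m - 1), (if W t = 0 ∧ W (t+1) = 1 then 1 else 0)) + 1 = 3 ^ m := by
  induction m with
  | zero => simp [clen_zero]
  | succ m ih =>
      obtain ⟨t, ht⟩ : ∃ t, clen m = t + 1 := ⟨clen m - 1, by have := clen_pos m; omega⟩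
      have hre : clen (m+1) - 1 = 3*t+3 := by rw [clen_succ, ht]; omega
      rw [hre, sum_split5 (fun k => if W k = 0 ∧ W (k+1) = 1 then 1 else 0) t]
      have htlt : t < clen m := by omega
      have e1 : ∑ k ∈ range t, (if W (t+1+k) = 0 ∧ W (t+1+k+1) = 1 then (1:ℕ) else 0)
          = ∑ k ∈ range t, (if W k = 0 ∧ W (k+1) = 1 then 1 else 0) := by
        refine Finset.sum_congr rfl fun k hk => ?_
        have hk' := mem_range.mp hk
        have a1 : t+1+k = clen m + k := by omega
        have a2 : t+1+k+1 = clen m + (k+1) := by omega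
        rw [a2, a1, W_shiftA hW (show k < clen m by omega),
          W_shiftA hW (show k+1 < clen m by omega)]
      have e2 : ∑ k ∈ range t, (if W (2*t+3+k) = 0 ∧ W (2*t+3+k+1) = 1 then (1:ℕ) else 0)
          = ∑ k ∈ range t, (if W k = 0 ∧ W (k+1) = 1 then 1 else 0) := by
        refine Finset.sum_congr rfl fun k hk => ?_
        have hk' := mem_range.mp hk
        have a1 : 2*t+3+k = 2*clen m + 1 + k := by omega
        have a2 : 2*t+3+k+1 = 2*clen m + 1 + (k+1) := by omega
        rw [a2, a1, W_shiftB hW (show k < clen m by omega),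
          W_shiftB hW (show k+1 < clen m by omega)]
      have e3 : (if W t = 0 ∧ W (t+1) = 1 then (1:ℕ) else 0) = 0 := by
        have a1 : t + 1 = clen m + 0 := by omega
        rw [a1, W_shiftA hW (clen_pos m), W_zero hW]
        simp
      have e4 : (if W (2*t+1) = 0 ∧ W (2*t+1+1) = 1 then (1:ℕ) else 0) = 1 := by
        have a1 : 2*t+1+1 = 2*clen m := by omega
        have a2 : 2*t+1 = clen m + (clen m - 1) := by omega
        rw [a1, a2, W_shiftA hW (show clen m - 1 < clen m by omega),
          W_last hW, W_spacer hW]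
        simp
      have e5 : (if W (2*t+2) = 0 ∧ W (2*t+2+1) = 1 then (1:ℕ) else 0) = 0 := by
        have a1 : 2*t+2 = 2*clen m := by omega
        rw [a1, W_spacer hW]
        simp
      have hsum : clen m - 1 = t := by omega
      rw [hsum] at ih
      rw [e1, e2, e3, e4, e5, pow_succ, ← ih]
      ring


lemma sum_split_mid (f : ℕ → ℕ) (T : ℕ) :
    ∑ k ∈ range (2*T+3), f k =
      (∑ k ∈ range (T+1), f k) + f (T+1) + ∑ k ∈ range (T+1), f (T+2+k) := by
  have A := Finset.sum_range_add f (T+1) (1+(T+1))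
  have B := Finset.sum_range_add (fun k => f (T+1+k)) 1 (T+1)
  rw [show 2*T+3 = (T+1) + (1+(T+1)) by ring, A, B, Finset.sum_range_one]
  have h4 : ∀ k : ℕ, T + 1 + (1 + k) = T+2+k := fun k => by ring
  simp only [h4, add_zero, ← add_assoc]

lemma sum_split_mid2 (f : ℕ → ℕ) (T : ℕ) :
    ∑ k ∈ range (2*T+2), f k =
      (∑ k ∈ range T, f k) + f T + ∑ k ∈ range (T+1), f (T+1+k) := by
  rw [show 2*T+2 = T + (1 + (T+1)) by ring]
  rw [Finset.sum_range_add, Finset.sum_range_add, Finset.sum_range_one]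
  have h4 : ∀ k : ℕ, T + (1 + k) = T+1+k := fun k => by ring
  simp only [h4, add_zero, ← add_assoc]

open Finset in
lemma suffix_eq (hW : IsChaconInfWord W) (p : ℕ) :
    ∀ m, p+1 ≤ m → ∀ j, j < 2*clen p + 1 →
      W (clen m - (2*clen p + 1) + j) = W (clen p + j) := by
  intro m
  induction m with
  | zero => omega
  | succ m ihm =>
      intro hm j hj
      rcases Nat.lt_or_ge m (p+1) with hm' | hm'
      · have hmp : m = p := by omega
        subst hmp
        rw [show clen (m+1) - (2*clen m + 1) + j = clen m + j by rw [clen_succ]; omega]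
      · have hi : 2*clen p + 1 ≤ clen m := by
          calc 2*clen p + 1 ≤ clen (p+1) := by rw [clen_succ]; omega
          _ ≤ clen m := clen_mono hm'
        have key : clen (m+1) - (2*clen p + 1) + j
            = 2*clen m + 1 + (clen m - (2*clen p + 1) + j) := by
          rw [clen_succ]; omega
        rw [key, W_shiftB hW (show clen m - (2*clen p + 1) + j < clen m by omega)]
        exact ihm hm' j hj

open Finset in
lemma W_clen (hW : IsChaconInfWord W) (p : ℕ) : W (clen p) = 0 := by
  have h := W_shiftA hW (show 0 < clen p from clen_pos p)
  rw [add_zero] at h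
  rw [h, W_zero hW]

open Finset in
lemma boundary (hW : IsChaconInfWord W) (p : ℕ) (g : Fin 2 → Fin 2 → ℕ)
    (hD : ∑ t ∈ range (clen p - 1), g (W (t+1)) (W t)
        = ∑ t ∈ range (clen p - 1), g (W t) (W (t+1))) :
    g (W (clen p)) 1 + ∑ t ∈ range (2*clen p), g (W (clen p + (t+1))) (W t)
      = ∑ j ∈ range (2*clen p + 1), g (W (clen p + j)) (W j) := by
  obtain ⟨T, hT⟩ : ∃ T, clen p = T + 1 := ⟨clen p - 1, by have := clen_pos p; omega⟩
  have hTlt : T < clen p := by omega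
  -- RHS
  have rhs : ∑ j ∈ range (2*clen p + 1), g (W (clen p + j)) (W j)
      = (∑ j ∈ range (clen p), g (W j) (W j)) + g 1 0
        + ((∑ t ∈ range T, g (W t) (W (t+1))) + g 0 1) := by
    rw [show 2*clen p + 1 = 2*T+3 by omega, sum_split_mid]
    have e1 : ∑ j ∈ range (T+1), g (W (clen p + j)) (W j)
        = ∑ j ∈ range (clen p), g (W j) (W j) := by
      rw [← hT]
      exact Finset.sum_congr rfl fun j hj => by
        rw [W_shiftA hW (mem_range.mp hj)]
    have e2 : g (W (clen p + (T+1))) (W (T+1)) = g 1 0 := by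
      rw [← hT, show clen p + clen p = 2 * clen p by ring, W_spacer hW, W_clen hW]
    have e3 : ∑ j ∈ range (T+1), g (W (clen p + (T+2+j))) (W (T+2+j))
        = (∑ t ∈ range T, g (W t) (W (t+1))) + g 0 1 := by
      rw [Finset.sum_range_succ]
      congr 1
      · refine Finset.sum_congr rfl fun j hj => ?_
        have hj' := mem_range.mp hj
        have a1 : clen p + (T+2+j) = 2*clen p + 1 + j := by omega
        have a2 : T+2+j = clen p + (j+1) := by omega
        rw [a1, a2, W_shiftB hW (show j < clen p by omega),
          W_shiftA hW (show j+1 < clen p by omega)]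
      · have a1 : clen p + (T+2+T) = 2*clen p + 1 + T := by omega
        have a2 : T+2+T = 2*clen p := by omega
        rw [a1, a2, W_shiftB hW hTlt, W_spacer hW]
        have : W T = 0 := by
          have := W_last hW p; rwa [show clen p - 1 = T by omega] at this
        rw [this]
    rw [e1, e2, e3]
  -- LHS
  have lhs : ∑ t ∈ range (2*clen p), g (W (clen p + (t+1))) (W t)
      = (∑ t ∈ range T, g (W (t+1)) (W t)) + g 1 0
        + ∑ j ∈ range (clen p), g (W j) (W j) := by
    rw [show 2*clen p = 2*T+2 by omega, sum_split_mid2]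
    have e1 : ∑ t ∈ range T, g (W (clen p + (t+1))) (W t)
        = ∑ t ∈ range T, g (W (t+1)) (W t) :=
      Finset.sum_congr rfl fun t ht => by
        rw [W_shiftA hW (show t+1 < clen p by have := mem_range.mp ht; omega)]
    have e2 : g (W (clen p + (T+1))) (W T) = g 1 0 := by
      rw [show clen p + (T+1) = 2*clen p by omega, W_spacer hW]
      have : W T = 0 := by
        have := W_last hW p; rwa [show clen p - 1 = T by omega] at this
      rw [this]
    have e3 : ∑ k ∈ range (T+1), g (W (clen p + (T+1+k+1))) (W (T+1+k))
        = ∑ j ∈ range (T+1), g (W j) (W j) := by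
      refine Finset.sum_congr rfl fun k hk => ?_
      have hk' : k < clen p := by have := mem_range.mp hk; omega
      have a1 : clen p + (T+1+k+1) = 2*clen p + 1 + k := by omega
      have a2 : T+1+k = clen p + k := by omega
      rw [a1, a2, W_shiftB hW hk', W_shiftA hW hk']
    have e4 : ∑ j ∈ range (T+1), g (W j) (W j)
        = ∑ j ∈ range (clen p), g (W j) (W j) := by rw [hT]
    rw [e1, e2, e3, e4]
  rw [lhs, rhs, W_clen hW]
  rw [show clen p - 1 = T by omega] at hD
  omega


open Finset in
lemma pair_rec (hW : IsChaconInfWord W) (p : ℕ) (g : Fin 2 → Fin 2 → ℕ)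
    (h11 : g 1 1 = 0)
    (hD : ∑ t ∈ range (clen p - 1), g (W (t+1)) (W t)
        = ∑ t ∈ range (clen p - 1), g (W t) (W (t+1)))
    (m : ℕ) (hm : p + 1 ≤ m) :
    ∑ k ∈ range (clen (m+1)), g (W k) (W (2*clen p + 1 + k))
      = 3 * ∑ k ∈ range (clen m), g (W k) (W (2*clen p + 1 + k)) := by
  set i : ℕ := 2*clen p + 1 with hi_def
  set l : ℕ := clen m with hl_def
  have hi : i ≤ l := by
    calc i ≤ clen (p+1) := by rw [clen_succ]; omega
    _ ≤ l := clen_mono hm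
  have hip : 0 < i := by omega
  have h31 : clen (m+1) = 3*l+1 := clen_succ m
  rw [h31, sum_split3 (fun k => g (W k) (W (i + k))) l]
  -- Term d
  have ed : ∑ k ∈ range l, g (W (2*l+1+k)) (W (i + (2*l+1+k)))
      = ∑ k ∈ range l, g (W k) (W (i + k)) := by
    refine Finset.sum_congr rfl fun k hk => ?_
    have hk' := mem_range.mp hk
    have r1 : W (2*l+1+k) = W k := W_shiftB hW hk'
    rcases Nat.lt_or_ge (i + k) l with hc | hc
    · have a2 : i + (2*l+1+k) = 2*l+1+(i+k) := by omega
      rw [r1, a2, W_shiftB hW hc]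
    · obtain ⟨q, hq⟩ : ∃ q, i + k = l + q := ⟨i + k - l, by omega⟩
      have a2 : i + (2*l+1+k) = clen (m+1) + q := by omega
      have hlt : q < l := by omega
      rw [r1, a2, W_shiftA hW (show q < clen (m+1) by omega), hq, W_shiftA hW hlt]
  -- Term c
  have ec : g (W (2*l)) (W (i + 2*l)) = 0 := by
    have a2 : i + 2*l = 2*l+1+(i-1) := by omega
    have a3 : i - 1 = 2*clen p := by omega
    rw [W_spacer hW, a2, W_shiftB hW (show i - 1 < l by omega), a3, W_spacer hW, h11]
  -- Term b
  have hsplit : ∀ f : ℕ → ℕ, ∑ k ∈ range l, f k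
      = ∑ k ∈ range (l-i), f k + ∑ j ∈ range i, f (l-i+j) := by
    intro f
    rw [← Finset.sum_range_add f (l-i) i, Nat.sub_add_cancel hi]
  have TTdef : ∀ j, j < i → W (l - i + j) = W (clen p + j) := fun j hj =>
    suffix_eq hW p m hm j hj
  have eb : ∑ k ∈ range l, g (W (l+k)) (W (i + (l+k)))
      = (∑ k ∈ range (l-i), g (W k) (W (i + k)))
        + ∑ j ∈ range i, g (W (clen p + j)) (W (2*l + j)) := by
    rw [hsplit (fun k => g (W (l+k)) (W (i + (l+k))))]
    congr 1
    · refine Finset.sum_congr rfl fun k hk => ?_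
      have hk' : k < l - i := mem_range.mp hk
      have a2 : i + (l+k) = l + (i+k) := by omega
      rw [W_shiftA hW (show k < l by omega), a2, W_shiftA hW (show i + k < l by omega)]
    · refine Finset.sum_congr rfl fun j hj => ?_
      have hj' : j < i := mem_range.mp hj
      have a1 : l + (l - i + j) = l + (l-i+j) := rfl
      have a2 : i + (l + (l - i + j)) = 2*l + j := by omega
      rw [a2, W_shiftA hW (show l - i + j < l by omega), TTdef j hj']
  -- rewrite the boundary sum
  have eb2 : ∑ j ∈ range i, g (W (clen p + j)) (W (2*l + j))
      = (∑ t ∈ range (2*clen p), g (W (clen p + (t+1))) (W t)) + g (W (clen p)) 1 := by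
    rw [hi_def, Finset.sum_range_succ' (fun j => g (W (clen p + j)) (W (2*l + j))) (2*clen p)]
    congr 1
    · refine Finset.sum_congr rfl fun t ht => ?_
      have ht' : t < 2*clen p := mem_range.mp ht
      have a2 : 2*l + (t+1) = 2*l+1+t := by omega
      rw [a2, W_shiftB hW (show t < l by omega)]
    · rw [add_zero, add_zero, W_spacer hW]
  -- decompose A
  have eA : ∑ k ∈ range l, g (W k) (W (i + k))
      = (∑ k ∈ range (l-i), g (W k) (W (i + k)))
        + ∑ j ∈ range i, g (W (clen p + j)) (W j) := by
    rw [hsplit (fun k => g (W k) (W (i + k)))]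
    congr 1
    refine Finset.sum_congr rfl fun j hj => ?_
    have hj' : j < i := mem_range.mp hj
    have a2 : i + (l - i + j) = l + j := by omega
    rw [TTdef j hj', a2, W_shiftA hW (show j < l by omega)]
  have hbound' : (∑ t ∈ range (2*clen p), g (W (clen p + (t+1))) (W t)) + g (W (clen p)) 1
      = ∑ j ∈ range i, g (W (clen p + j)) (W j) := by
    rw [hi_def, add_comm]
    exact boundary hW p g hD
  rw [ed, ec, eb, eb2, hbound', eA]
  omega

open Finset in
lemma pair_base (hW : IsChaconInfWord W) (p : ℕ) (g : Fin 2 → Fin 2 → ℕ)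
    (hdiag : ∀ a : Fin 2, g a a = 0) :
    ∑ k ∈ range (clen (p+1)), g (W k) (W (2*clen p + 1 + k))
      = (∑ t ∈ range (clen p - 1), g (W t) (W (t+1))) + g 0 1 + g 1 0 := by
  have h31 : clen (p+1) = 3*clen p+1 := clen_succ p
  set L : ℕ := clen p with hL_def
  have hLpos : 0 < L := clen_pos p
  rw [h31, sum_split3 (fun k => g (W k) (W (2*L + 1 + k))) L]
  have ea : ∑ k ∈ range L, g (W k) (W (2*L+1+k)) = 0 := by
    rw [Finset.sum_congr rfl fun k hk => ?_, Finset.sum_const, smul_zero]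
    rw [W_shiftB hW (mem_range.mp hk), hdiag]
  have eb : ∑ k ∈ range L, g (W (L+k)) (W (2*L+1+(L+k))) = 0 := by
    rw [Finset.sum_congr rfl fun k hk => ?_, Finset.sum_const, smul_zero]
    have hk' := mem_range.mp hk
    have a2 : 2*L+1+(L+k) = clen (p+1) + k := by omega
    rw [W_shiftA hW hk', a2, W_shiftA hW (show k < clen (p+1) by omega), hdiag]
  have ec : g (W (2*L)) (W (2*L+1+2*L)) = g 1 0 := by
    have a2 : 2*L+1+2*L = clen (p+1) + L := by omega
    rw [W_spacer hW, a2, W_shiftA hW (show L < clen (p+1) by omega), W_clen hW]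
  have ed : ∑ k ∈ range L, g (W (2*L+1+k)) (W (2*L+1+(2*L+1+k)))
      = (∑ t ∈ range (L - 1), g (W t) (W (t+1))) + g 0 1 := by
    obtain ⟨T, hT⟩ : ∃ T, L = T + 1 := ⟨L - 1, by omega⟩
    have step : ∀ k, k < L → g (W (2*L+1+k)) (W (2*L+1+(2*L+1+k)))
        = g (W k) (W (clen p + (1+k))) := by
      intro k hk
      have a2 : 2*L+1+(2*L+1+k) = clen (p+1) + (L+1+k) := by omega
      have a3 : L+1+k = clen p + (1+k) := by omega
      rw [W_shiftB hW hk, a2, W_shiftA hW (show L+1+k < clen (p+1) by omega), a3]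
    rw [Finset.sum_congr rfl (fun k hk => step k (mem_range.mp hk))]
    rw [show L = T+1 from hT, Finset.sum_range_succ]
    congr 1
    · refine Finset.sum_congr rfl fun t ht => ?_
      have ht' : t < T := mem_range.mp ht
      have a4 : clen p + (1+t) = clen p + (1+t) := rfl
      rw [show (1:ℕ)+t = t+1 by ring, W_shiftA hW (show t+1 < clen p by omega)]
    · have a5 : clen p + (1+T) = 2*clen p := by omega
      have hWT : W T = 0 := by
        have := W_last hW p; rwa [show clen p - 1 = T by omega] at this
      rw [a5, W_spacer hW, hWT]
  rw [ea, eb, ec, ed]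
  omega


open Finset in
lemma tele (hW : IsChaconInfWord W) (p : ℕ) :
    ∑ t ∈ range (clen p - 1), (if W (t+1) = 0 ∧ W t = 1 then (1:ℕ) else 0)
      = ∑ t ∈ range (clen p - 1), (if W t = 0 ∧ W (t+1) = 1 then (1:ℕ) else 0) := by
  set N : ℕ := clen p - 1 with hN
  have hN1 : N + 1 = clen p := by have := clen_pos p; omega
  have key : ∀ a b : Fin 2, (if b = 0 ∧ a = 1 then (1:ℕ) else 0) + (if b = 1 then 1 else 0)
      = (if a = 0 ∧ b = 1 then 1 else 0) + (if a = 1 then 1 else 0) := by decide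
  have h1 : ∑ t ∈ range N, ((if W (t+1) = 0 ∧ W t = 1 then (1:ℕ) else 0)
        + (if W (t+1) = 1 then 1 else 0))
      = ∑ t ∈ range N, ((if W t = 0 ∧ W (t+1) = 1 then (1:ℕ) else 0)
        + (if W t = 1 then 1 else 0)) :=
    Finset.sum_congr rfl fun t _ => key (W t) (W (t+1))
  rw [Finset.sum_add_distrib, Finset.sum_add_distrib] at h1
  have e1 : ∑ t ∈ range (N+1), (if W t = 1 then (1:ℕ) else 0)
      = (∑ t ∈ range N, (if W (t+1) = 1 then 1 else 0)) + (if W 0 = 1 then 1 else 0) :=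
    Finset.sum_range_succ' _ N
  have e2 : ∑ t ∈ range (N+1), (if W t = 1 then (1:ℕ) else 0)
      = (∑ t ∈ range N, (if W t = 1 then 1 else 0)) + (if W N = 1 then 1 else 0) :=
    Finset.sum_range_succ _ N
  have z1 : (if W 0 = 1 then (1:ℕ) else 0) = 0 := by rw [W_zero hW]; simp
  have z2 : (if W N = 1 then (1:ℕ) else 0) = 0 := by
    have := W_last hW p
    rw [← hN] at this
    rw [this]; simp
  omega

open Finset in
lemma pair_pow (hW : IsChaconInfWord W) (p : ℕ) (g : Fin 2 → Fin 2 → ℕ)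
    (h11 : g 1 1 = 0)
    (hD : ∑ t ∈ range (clen p - 1), g (W (t+1)) (W t)
        = ∑ t ∈ range (clen p - 1), g (W t) (W (t+1))) (d : ℕ) :
    ∑ k ∈ range (clen (p+1+d)), g (W k) (W (2*clen p + 1 + k))
      = 3^d * ∑ k ∈ range (clen (p+1)), g (W k) (W (2*clen p + 1 + k)) := by
  induction d with
  | zero => simp
  | succ d ih =>
      rw [show p+1+(d+1) = (p+1+d)+1 by ring,
        pair_rec hW p g h11 hD (p+1+d) (by omega), ih, pow_succ]
      ring

open Finset in
lemma cntA_val (hW : IsChaconInfWord W) (p d : ℕ) :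
    ∑ k ∈ range (clen (p+1+d)), (if W k = 0 ∧ W (2*clen p + 1 + k) = 1 then (1:ℕ) else 0)
      = 3^d * ((∑ t ∈ range (clen p - 1), (if W t = 0 ∧ W (t+1) = 1 then (1:ℕ) else 0)) + 1) := by
  have base := pair_base hW p (fun a b => if a = 0 ∧ b = 1 then (1:ℕ) else 0) (by decide)
  have pow := pair_pow hW p (fun a b => if a = 0 ∧ b = 1 then (1:ℕ) else 0) (by decide)
    (tele hW p) d
  simp only at base pow
  rw [pow, base]
  norm_num

open Finset in
lemma Dpsi (hW : IsChaconInfWord W) (p : ℕ) :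
    ∑ t ∈ range (clen p - 1), (if W t ≠ W (t+1) then (1:ℕ) else 0)
      = 2 * ∑ t ∈ range (clen p - 1), (if W t = 0 ∧ W (t+1) = 1 then (1:ℕ) else 0) := by
  have key : ∀ a b : Fin 2, (if a ≠ b then (1:ℕ) else 0)
      = (if a = 0 ∧ b = 1 then 1 else 0) + (if b = 0 ∧ a = 1 then 1 else 0) := by decide
  have h1 : ∑ t ∈ range (clen p - 1), (if W t ≠ W (t+1) then (1:ℕ) else 0)
      = ∑ t ∈ range (clen p - 1), ((if W t = 0 ∧ W (t+1) = 1 then (1:ℕ) else 0)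
          + (if W (t+1) = 0 ∧ W t = 1 then 1 else 0)) :=
    Finset.sum_congr rfl fun t _ => key (W t) (W (t+1))
  rw [h1, Finset.sum_add_distrib, tele hW p, two_mul]

open Finset in
lemma cntE_val (hW : IsChaconInfWord W) (p d : ℕ) :
    ∑ k ∈ range (clen (p+1+d)), (if W k ≠ W (2*clen p + 1 + k) then (1:ℕ) else 0)
      = 3^d * (2 * ((∑ t ∈ range (clen p - 1), (if W t = 0 ∧ W (t+1) = 1 then (1:ℕ) else 0)) + 1)) := by
  have hsym : ∀ a b : Fin 2, (if b ≠ a then (1:ℕ) else 0) = (if a ≠ b then 1 else 0) := by decide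
  have hD : ∑ t ∈ range (clen p - 1), (if W (t+1) ≠ W t then (1:ℕ) else 0)
      = ∑ t ∈ range (clen p - 1), (if W t ≠ W (t+1) then (1:ℕ) else 0) :=
    Finset.sum_congr rfl fun t _ => hsym (W t) (W (t+1))
  have base := pair_base hW p (fun a b => if a ≠ b then (1:ℕ) else 0) (by decide)
  have pow := pair_pow hW p (fun a b => if a ≠ b then (1:ℕ) else 0) (by decide)
    (by simpa using hD) d
  rw [pow, base, Dpsi hW p]
  have : (if (0:Fin 2) ≠ 1 then (1:ℕ) else 0) = 1 := by decide
  have h2 : (if (1:Fin 2) ≠ 0 then (1:ℕ) else 0) = 1 := by decide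
  rw [this, h2]
  ring


lemma subword_getD (W : ℕ → Fin 2) (i L k : ℕ) (h : k < L) :
    (subword W i L).getD k 0 = W (i + k) := by
  simp only [subword]
  rw [List.getD_eq_getElem _ _ (by simpa using h)]
  simp

open Finset in
lemma hamming0_eval (hW : IsChaconInfWord W) (p d : ℕ) :
    hamming0 (chaconWord (p+1+d)) (subword W (2*clen p + 1) (clen (p+1+d)))
      = ((3^d * ((∑ t ∈ range (clen p - 1), (if W t = 0 ∧ W (t+1) = 1 then (1:ℕ) else 0)) + 1) : ℕ) : ℝ)
        / ((3^(p+1+d) : ℕ) : ℝ) := by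
  simp only [hamming0]
  have hlen : (chaconWord (p+1+d)).length = clen (p+1+d) := rfl
  rw [hlen]
  congr 1
  · norm_cast
    rw [Finset.card_filter, ← cntA_val hW p d]
    refine Finset.sum_congr rfl fun k hk => ?_
    have hk' : k < clen (p+1+d) := Finset.mem_range.mp hk
    have e1 : (chaconWord (p+1+d)).getD k 0 = W k := (hW _ k hk').symm
    have e2 : (subword W (2*clen p+1) (clen (p+1+d))).getD k 0 = W (2*clen p+1+k) :=
      subword_getD W _ _ _ hk'
    rw [e1, e2]
  · norm_cast
    rw [Finset.card_filter, ← cntZ hW (p+1+d)]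
    refine Finset.sum_congr rfl fun k hk => ?_
    have hk' : k < clen (p+1+d) := Finset.mem_range.mp hk
    have e1 : (chaconWord (p+1+d)).getD k 0 = W k := (hW _ k hk').symm
    rw [e1]

open Finset in
lemma hamming_eval (hW : IsChaconInfWord W) (p d : ℕ) :
    hamming (chaconWord (p+1+d)) (subword W (2*clen p + 1) (clen (p+1+d)))
      = ((3^d * (2 * ((∑ t ∈ range (clen p - 1), (if W t = 0 ∧ W (t+1) = 1 then (1:ℕ) else 0)) + 1)) : ℕ) : ℝ)
        / ((clen (p+1+d) : ℕ) : ℝ) := by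
  simp only [hamming]
  have hlen : (chaconWord (p+1+d)).length = clen (p+1+d) := rfl
  rw [hlen]
  congr 1
  norm_cast
  rw [Finset.card_filter, ← cntE_val hW p d]
  refine Finset.sum_congr rfl fun k hk => ?_
  have hk' : k < clen (p+1+d) := Finset.mem_range.mp hk
  have e1 : (chaconWord (p+1+d)).getD k 0 = W k := (hW _ k hk').symm
  have e2 : (subword W (2*clen p+1) (clen (p+1+d))).getD k 0 = W (2*clen p+1+k) :=
    subword_getD W _ _ _ hk'
  rw [e1, e2]

open Filter in
lemma ratio_tendsto : Tendsto (fun m : ℕ => ((3:ℝ)^(m+1))/((3:ℝ)^(m+1)-1)) atTop (nhds 1) := by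
  have k0 : Tendsto (fun m : ℕ => ((1:ℝ)/3)^m) atTop (nhds 0) :=
    tendsto_pow_atTop_nhds_zero_of_lt_one (by norm_num) (by norm_num)
  have k1 : Tendsto (fun m : ℕ => ((1:ℝ)/3)^(m+1)) atTop (nhds 0) :=
    k0.comp (tendsto_add_atTop_nat 1)
  have k2 : Tendsto (fun m : ℕ => 1 - ((1:ℝ)/3)^(m+1)) atTop (nhds 1) := by
    have h1 : Tendsto (fun _ : ℕ => (1:ℝ)) atTop (nhds 1) := tendsto_const_nhds
    simpa using h1.sub k1
  have k3 : Tendsto (fun m : ℕ => (1 - ((1:ℝ)/3)^(m+1))⁻¹) atTop (nhds 1) := by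
    simpa using k2.inv₀ one_ne_zero
  refine k3.congr fun m => ?_
  have hpow : (0:ℝ) < 3^(m+1) := by positivity
  have hge : (3:ℝ)^1 ≤ 3^(m+1) := by
    apply pow_le_pow_right₀ (by norm_num) (by omega)
  have hne : (3:ℝ)^(m+1) - 1 ≠ 0 := by norm_num at hge ⊢; nlinarith
  have hlt : ((1:ℝ)/3)^(m+1) < 1 := by
    apply pow_lt_one₀ (by norm_num) (by norm_num)
    omega
  have key : (3:ℝ)^(m+1) * ((1:ℝ)/3)^(m+1) = 1 := by
    rw [← mul_pow]
    norm_num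
  rw [eq_div_iff hne, inv_mul_eq_div, div_eq_iff (by linarith : (1:ℝ) - (1/3)^(m+1) ≠ 0)]
  linear_combination key

end ChaconAux

theorem chacon_special_shift_limits (W : ℕ → Fin 2) (hW : IsChaconInfWord W) (n : ℕ)
    (hn : 0 < n) :
    Tendsto
        (fun m => hamming0 (chaconWord m)
          (subword W (2 * (chaconWord (n - 1)).length + 1) (chaconWord m).length))
        atTop (nhds (1 / 6 + 1 / (2 * 3 ^ n))) ∧
      Tendsto
        (fun m => hamming (chaconWord m)
          (subword W (2 * (chaconWord (n - 1)).length + 1) (chaconWord m).length))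
        atTop (nhds (2 / 9 + 2 / 3 ^ (n + 1))) := by
  obtain ⟨p, rfl⟩ : ∃ p, n = p + 1 := ⟨n - 1, by omega⟩
  have hclen : ∀ q, (chaconWord q).length = ChaconAux.clen q := fun _ => rfl
  simp only [Nat.add_sub_cancel, hclen]
  set Pc : ℕ := ∑ t ∈ Finset.range (ChaconAux.clen p - 1),
    (if W t = 0 ∧ W (t+1) = 1 then (1:ℕ) else 0) with hPcdef
  have hPc3 : 2 * Pc + 1 = 3^p := ChaconAux.cntP hW p
  have hPcR : 2 * (Pc:ℝ) + 1 = 3^p := by exact_mod_cast hPc3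
  have hP : (Pc:ℝ) + 1 = (3^p + 1)/2 := by linarith
  have hApos : (0:ℝ) < 3^p := by positivity
  constructor
  · refine Filter.Tendsto.congr' ?_ tendsto_const_nhds
    filter_upwards [Filter.eventually_ge_atTop (p+1)] with m hm
    obtain ⟨d, rfl⟩ : ∃ d, m = p + 1 + d := ⟨m - (p+1), by omega⟩
    rw [ChaconAux.hamming0_eval hW p d, ← hPcdef]
    push_cast
    rw [show (3:ℝ)^(p+1+d) = 3^(p+1) * 3^d from by rw [pow_add]]
    rw [hP]
    rw [show (3:ℝ)^(p+1) = 3 * 3^p from by rw [pow_succ]; ring]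
    have hBpos : (0:ℝ) < 3^d := by positivity
    field_simp
    ring
  · have hC := ChaconAux.ratio_tendsto.const_mul ((2:ℝ)/9 + 2/3^(p+1+1))
    rw [mul_one] at hC
    refine Filter.Tendsto.congr' ?_ hC
    filter_upwards [Filter.eventually_ge_atTop (p+1)] with m hm
    obtain ⟨d, rfl⟩ : ∃ d, m = p + 1 + d := ⟨m - (p+1), by omega⟩
    rw [ChaconAux.hamming_eval hW p d, ← hPcdef]
    have hclenR : ((ChaconAux.clen (p+1+d) : ℕ) : ℝ) = (3^(p+1+d+1) - 1)/2 := by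
      have h := congrArg (Nat.cast : ℕ → ℝ) (ChaconAux.two_clen (p+1+d))
      push_cast at h
      linarith
    rw [hclenR]
    push_cast
    rw [hP]
    have hE : (3:ℝ)^(p+1+d+1) = 3^p * 3^d * 9 := by
      rw [show p+1+d+1 = p + d + 2 by omega, pow_add, pow_add]
      ring
    rw [hE, show (3:ℝ)^(p+1+1) = 9 * 3^p from by
      rw [show p+1+1 = p + 2 by omega, pow_add]; ring]
    have hBpos : (0:ℝ) < 3^d := by positivity
    have h1 : (1:ℝ) ≤ 3^p := one_le_pow₀ (by norm_num)
    have h2 : (1:ℝ) ≤ 3^d := one_le_pow₀ (by norm_num)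
    have hne : (3:ℝ)^p * 3^d * 9 - 1 ≠ 0 := by nlinarith
    field_simp
end

section
/- For all natural numbers n and k with k ≥ 1, every occurrence of W_{n+1} in W_{n+1+k} is an expected occurrence; equivalently, combined over all levels: any occurrence of Wₙ in W_{n+k} whose position is j satisfies that j is one of the 3ᵏ positions arising from the recursive decomposition of W_{n+k} into 3ᵏ copies of Wₙ with single 1s inserted between some consecutive copies (i.e., there are no occurrences of Wₙ in W_{n+k} other than these). -/
open Filter

/-- The positions of the expected occurrences of `Wₙ` in `W_{n+k}`, coming from the
recursive decomposition of `W_{n+k}` into `3ᵏ` copies of `Wₙ` with single `1`s inserted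
between some consecutive copies. -/
def expectedPos (n : ℕ) : ℕ → Finset ℕ
  | 0 => {0}
  | k + 1 =>
      expectedPos n k ∪ (expectedPos n k).image (· + (chaconWord (n + k)).length) ∪
        (expectedPos n k).image (· + (2 * (chaconWord (n + k)).length + 1))

namespace ChaconAux

lemma len_pos (n : ℕ) : 0 < (chaconWord n).length := by
  induction n with
  | zero => simp [chaconWord]
  | succ n ih => simp [chaconWord]

lemma len_succ (n : ℕ) : (chaconWord (n+1)).length = 3 * (chaconWord n).length + 1 := by
  simp [chaconWord]; ring

lemma getD_lt (n i : ℕ) (h : i < (chaconWord n).length) :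
    (chaconWord (n+1)).getD i 0 = (chaconWord n).getD i 0 := by
  show ((chaconWord n ++ chaconWord n ++ [1]) ++ chaconWord n).getD i 0 = _
  rw [List.getD_append _ _ _ _ (by simp; omega),
      List.getD_append _ _ _ _ (by simp; omega),
      List.getD_append _ _ _ _ h]

lemma getD_mid (n i : ℕ) (h : i < (chaconWord n).length) :
    (chaconWord (n+1)).getD ((chaconWord n).length + i) 0 = (chaconWord n).getD i 0 := by
  show ((chaconWord n ++ chaconWord n ++ [1]) ++ chaconWord n).getD _ 0 = _
  rw [List.getD_append _ _ _ _ (by simp; omega),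
      List.getD_append _ _ _ _ (by simp; omega),
      List.getD_append_right _ _ _ _ (by omega)]
  congr 1
  omega

lemma getD_one (n : ℕ) :
    (chaconWord (n+1)).getD (2 * (chaconWord n).length) 0 = 1 := by
  show ((chaconWord n ++ chaconWord n ++ [1]) ++ chaconWord n).getD _ 0 = _
  rw [List.getD_append _ _ _ _ (by simp; omega),
      List.getD_append_right _ _ _ _ (by simp; omega)]
  have h : 2 * (chaconWord n).length - (chaconWord n ++ chaconWord n).length = 0 := by
    simp [Nat.two_mul]
  rw [h]
  rfl

lemma getD_hi (n i : ℕ) :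
    (chaconWord (n+1)).getD (2 * (chaconWord n).length + 1 + i) 0 = (chaconWord n).getD i 0 := by
  show ((chaconWord n ++ chaconWord n ++ [1]) ++ chaconWord n).getD _ 0 = _
  rw [List.getD_append_right _ _ _ _ (by simp; omega)]
  congr 1
  simp
  omega

lemma getD_zero (n : ℕ) : (chaconWord n).getD 0 0 = 0 := by
  induction n with
  | zero => rfl
  | succ n ih => rw [getD_lt n 0 (len_pos n)]; exact ih

lemma getD_last (n : ℕ) : (chaconWord n).getD ((chaconWord n).length - 1) 0 = 0 := by
  induction n with
  | zero => rfl
  | succ n ih =>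
    have h := len_pos n
    have : (chaconWord (n+1)).length - 1
        = 2 * (chaconWord n).length + 1 + ((chaconWord n).length - 1) := by
      rw [len_succ]; omega
    rw [this, getD_hi]
    exact ih

lemma expected_occurs (n k : ℕ) : ∀ p ∈ expectedPos n k,
    OccursAt (chaconWord n) (chaconWord (n + k)) p := by
  induction k with
  | zero =>
    intro p hp
    simp [expectedPos] at hp
    subst hp
    exact ⟨by simp, fun i hi => by simp⟩
  | succ k ih =>
    intro p hp
    set M := (chaconWord (n+k)).length with hM
    have hbig : (chaconWord (n+k+1)).length = 3 * M + 1 := len_succ (n+k)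
    have hbig' : (chaconWord (n + (k+1))).length = 3 * M + 1 := hbig
    simp only [expectedPos, Finset.mem_union, Finset.mem_image] at hp
    rcases hp with (hp | ⟨q, hq, rfl⟩) | ⟨q, hq, rfl⟩
    · obtain ⟨h1, h2⟩ := ih p hp
      refine ⟨by omega, fun i hi => ?_⟩
      rw [show (n + (k+1)) = (n+k) + 1 from rfl, getD_lt (n+k) (p+i) (by omega)]
      exact h2 i hi
    · obtain ⟨h1, h2⟩ := ih q hq
      refine ⟨by omega, fun i hi => ?_⟩
      rw [show (n + (k+1)) = (n+k) + 1 from rfl,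
        show q + M + i = M + (q + i) by omega, getD_mid (n+k) (q+i) (by omega)]
      exact h2 i hi
    · obtain ⟨h1, h2⟩ := ih q hq
      refine ⟨by omega, fun i hi => ?_⟩
      rw [show (n + (k+1)) = (n+k) + 1 from rfl,
        show q + (2*M+1) + i = 2*M + 1 + (q + i) by omega, getD_hi (n+k) (q+i)]
      exact h2 i hi

def tr (a b : ℕ) (S : Finset ℕ) : Finset ℕ := S ∪ S.image (· + a) ∪ S.image (· + b)

lemma tr_union (a b : ℕ) (S T : Finset ℕ) : tr a b (S ∪ T) = tr a b S ∪ tr a b T := by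
  simp only [tr, Finset.image_union]
  ext x
  simp only [Finset.mem_union]
  tauto

lemma image_add_comm (c d : ℕ) (S : Finset ℕ) :
    (S.image (· + c)).image (· + d) = (S.image (· + d)).image (· + c) := by
  rw [Finset.image_image, Finset.image_image]
  congr 1
  funext x
  simp [Function.comp]
  omega

lemma tr_image_add (a b c : ℕ) (S : Finset ℕ) :
    tr a b (S.image (· + c)) = (tr a b S).image (· + c) := by
  simp only [tr, Finset.image_union]
  rw [image_add_comm c a, image_add_comm c b]

lemma tr_comm (a b c d : ℕ) (S : Finset ℕ) :
    tr a b (tr c d S) = tr c d (tr a b S) := by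
  show tr a b (S ∪ S.image (· + c) ∪ S.image (· + d)) = _
  rw [tr_union, tr_union, tr_image_add, tr_image_add]
  rfl

lemma expectedPos_succ (n k : ℕ) :
    expectedPos n (k+1)
      = tr (chaconWord (n+k)).length (2 * (chaconWord (n+k)).length + 1) (expectedPos n k) :=
  rfl

lemma expand (n k : ℕ) :
    expectedPos n (k+1)
      = tr (chaconWord n).length (2 * (chaconWord n).length + 1) (expectedPos (n+1) k) := by
  induction k with
  | zero => rfl
  | succ k ih =>
    rw [expectedPos_succ, ih, expectedPos_succ,
      show n + 1 + k = n + (k+1) from by omega, tr_comm]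

lemma main (n : ℕ) : ∀ k j, OccursAt (chaconWord n) (chaconWord (n + k)) j →
    j ∈ expectedPos n k := by
  induction n with
  | zero =>
    intro k
    induction k with
    | zero =>
      intro j h
      have h1 := h.1
      simp [chaconWord] at h1
      simp [expectedPos]
      omega
    | succ k ih =>
      intro j h
      obtain ⟨hlen, hval⟩ := h
      have e : (0:ℕ) + (k+1) = k + 1 := by omega
      rw [e] at hlen hval
      set L := (chaconWord k).length with hLdef
      have hLpos := len_pos k
      have hlen' : j + 1 ≤ 3 * L + 1 := by
        have := len_succ k
        simp [chaconWord] at hlen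
        omega
      have h0 : (chaconWord (k+1)).getD j 0 = 0 := by
        have := hval 0 (by simp [chaconWord])
        simpa [chaconWord] using this
      have mem_goal : ∀ m, m ∈ expectedPos 0 k →
          (m ∈ expectedPos 0 (k+1) ∧ m + L ∈ expectedPos 0 (k+1)
            ∧ m + (2*L+1) ∈ expectedPos 0 (k+1)) := by
        intro m hm
        have e2 : (0:ℕ) + k = k := by omega
        simp only [expectedPos, Finset.mem_union, Finset.mem_image, e2, ← hLdef]
        exact ⟨Or.inl (Or.inl hm), Or.inl (Or.inr ⟨m, hm, rfl⟩), Or.inr ⟨m, hm, rfl⟩⟩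
      have occ0 : ∀ i, i < L → (chaconWord k).getD i 0 = 0 →
          i ∈ expectedPos 0 k := by
        intro i hi hv
        refine ih i ⟨by simp [chaconWord]; omega, fun m hm => ?_⟩
        simp [chaconWord] at hm ⊢
        subst hm
        rw [Nat.zero_add] at *
        simpa using hv
      rcases lt_or_ge j L with hj | hj
      · have : (chaconWord k).getD j 0 = 0 := by rw [← getD_lt k j hj]; exact h0
        exact (mem_goal j (occ0 j hj this)).1
      · rcases lt_or_ge j (2*L) with hj2 | hj2
        · have hlt : j - L < L := by omega
          have : (chaconWord k).getD (j - L) 0 = 0 := by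
            rw [← getD_mid k (j-L) hlt, show L + (j - L) = j by omega]
            exact h0
          have := (mem_goal (j-L) (occ0 (j-L) hlt this)).2.1
          rwa [show j - L + L = j by omega] at this
        · rcases eq_or_lt_of_le hj2 with hj3 | hj3
          · exfalso
            rw [← hj3, getD_one k] at h0
            exact absurd h0 (by decide)
          · have hlt : j - (2*L+1) < L := by omega
            have : (chaconWord k).getD (j - (2*L+1)) 0 = 0 := by
              rw [← getD_hi k (j - (2*L+1)), show 2*L+1 + (j - (2*L+1)) = j by omega]
              exact h0
            have := (mem_goal (j - (2*L+1)) (occ0 _ hlt this)).2.2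
            rwa [show j - (2*L+1) + (2*L+1) = j by omega] at this
  | succ n ihn =>
    intro k j h
    obtain ⟨hlen, hval⟩ := h
    set L := (chaconWord n).length with hLdef
    have hLpos := len_pos n
    have hMlen : (chaconWord (n+1)).length = 3 * L + 1 := len_succ n
    have e : n + 1 + k = n + (k + 1) := by omega
    rw [e] at hlen hval
    rw [hMlen] at hlen
    have key : ∀ o, o + L ≤ 3*L + 1 →
        (∀ i, i < L → (chaconWord (n+1)).getD (o+i) 0 = (chaconWord n).getD i 0) →
        OccursAt (chaconWord n) (chaconWord (n + (k+1))) (j + o) := by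
      intro o ho hvals
      refine ⟨by omega, fun i hi => ?_⟩
      rw [show j + o + i = j + (o + i) by omega, hval (o+i) (by rw [hMlen]; omega),
        hvals i hi]
    have m1 : j ∈ expectedPos n (k+1) := by
      have := ihn (k+1) (j+0) (key 0 (by omega) (fun i hi => by rw [Nat.zero_add]; exact getD_lt n i hi))
      simpa using this
    have m2 : j + L ∈ expectedPos n (k+1) :=
      ihn (k+1) (j+L) (key L (by omega) (fun i hi => getD_mid n i hi))
    have hone : (chaconWord (n + (k+1))).getD (j + 2*L) 0 = 1 := by
      rw [hval (2*L) (by rw [hMlen]; omega), getD_one n]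
    have hexp : ∀ p ∈ expectedPos (n+1) k, ∀ i, i < 3*L + 1 →
        (chaconWord (n + (k+1))).getD (p + i) 0 = (chaconWord (n+1)).getD i 0 := by
      intro p hp i hi
      have := (expected_occurs (n+1) k p hp).2 i (by rw [hMlen]; exact hi)
      rwa [show n + 1 + k = n + (k+1) from e] at this
    have vL : (chaconWord (n+1)).getD L 0 = 0 := by
      have := getD_mid n 0 hLpos
      rw [getD_zero] at this
      simpa using this
    have v2L : (chaconWord (n+1)).getD (2*L) 0 = 1 := getD_one n
    have v3L : (chaconWord (n+1)).getD (3*L) 0 = 0 := by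
      have := getD_hi n (L-1)
      rw [getD_last] at this
      rwa [show 2*L + 1 + (L-1) = 3*L by omega] at this
    rw [expand n k] at m1 m2
    simp only [tr, Finset.mem_union, Finset.mem_image] at m1 m2
    rcases m1 with (hp | ⟨p, hp, hpj⟩) | ⟨p, hp, hpj⟩
    · exact hp
    · -- j = p + L : contradiction via last letter of block p
      exfalso
      have h1 := hexp p hp (3*L) (by omega)
      rw [v3L] at h1
      rw [show p + 3*L = j + 2*L by omega] at h1
      rw [h1] at hone
      exact absurd hone (by decide)
    · -- j = p + (2L+1)
      rcases m2 with (hq | ⟨q, hq, hqj⟩) | ⟨q, hq, hqj⟩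
      · -- j + L ∈ P : letter at (j+L) + L is 0, but must be 1
        exfalso
        have h1 := hexp (j+L) hq L (by omega)
        rw [vL] at h1
        rw [show j + L + L = j + 2*L by omega] at h1
        rw [h1] at hone
        exact absurd hone (by decide)
      · -- q + L = j + L, so q = j ∈ P
        have : q = j := by omega
        subst this
        exact hq
      · -- q + (2L+1) = j + L, q = p + L
        exfalso
        have hq2 : q + 2*L = p + 3*L := by omega
        have h1 := hexp q hq (2*L) (by omega)
        rw [v2L] at h1
        have h2 := hexp p hp (3*L) (by omega)
        rw [v3L] at h2
        rw [hq2, h2] at h1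
        exact absurd h1 (by decide)

end ChaconAux

theorem chacon_only_expected_occurrences (n k : ℕ) (hk : 1 ≤ k) (j : ℕ)
    (hocc : OccursAt (chaconWord n) (chaconWord (n + k)) j) :
    j ∈ expectedPos n k :=
  ChaconAux.main n k j hocc
end
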